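/- If G is an orientable, checkerboard colourable embedded graph, then P(G;−1) = (−1)^{f(G)} 2^{e(G)}, where f(G) is the number of faces and e(G) the number of edges of G. -/

import Mathlib

open Polynomial

namespace Penrose

/-- Addition in the Klein four-group `Bool × Bool` (componentwise xor). -/
def kAdd (p q : Bool × Bool) : Bool × Bool := (xor p.1 q.1, xor p.2 q.2)

lemma kAdd_eq_zero_iff : ∀ p q : Bool × Bool, kAdd p q = (false, false) ↔ p = q := by decide
lemma kAdd_eq_right_iff : ∀ p q : Bool × Bool, kAdd p q = q ↔ p = (false, false) := by decide
lemma kAdd_kAdd : ∀ p q : Bool × Bool, kAdd (kAdd p q) q = p := by decide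

/-- The flags (corner triples) of a ribbon graph with edge set `E`: each edge carries
four flags. -/
abbrev Flags (E : Type) := E × Bool × Bool

/-- A ribbon graph (cellularly embedded graph, possibly non-orientable) with edge set `E`,
in the flag (graph-encoded map) model.  The involution `σ0` (crossing edge `e`) acts on the
four flags of `e` by adding `a e` in the Klein four-group, the involution `σ2` (switching
sides of `e`) by adding `b e`, and the fixed-point-free involution `s1` (moving to the
adjacent edge-end in the same vertex-face corner) is given as data.
Vertices are the orbits of `⟨s1, σ2⟩`, edges the orbits of `⟨σ0, σ2⟩`, and the faces
(boundary components) the orbits of `⟨σ0, s1⟩`. -/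
structure RibbonGraph (E : Type) where
  s1 : Flags E → Flags E
  s1_invol : ∀ f, s1 (s1 f) = f
  s1_ne : ∀ f, s1 f ≠ f
  a : E → Bool × Bool
  b : E → Bool × Bool
  a_ne : ∀ e, a e ≠ (false, false)
  b_ne : ∀ e, b e ≠ (false, false)
  ab_ne : ∀ e, a e ≠ b e

namespace RibbonGraph

variable {E : Type}

/-- The involution crossing an edge. -/
def σ0 (G : RibbonGraph E) (f : Flags E) : Flags E := (f.1, kAdd f.2 (G.a f.1))

/-- The involution changing the side (face) of an edge, staying at the same vertex. -/
def σ2 (G : RibbonGraph E) (f : Flags E) : Flags E := (f.1, kAdd f.2 (G.b f.1))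

lemma σ2_σ2 (G : RibbonGraph E) (f : Flags E) : G.σ2 (G.σ2 f) = f := by
  cases f with
  | mk e p => simp [σ2, kAdd_kAdd]

/-- The partial Petrial `G^{τ(A)}`: give a half-twist to every edge in `A`
(replace `σ0` by `σ0 σ2` on the flags of the edges of `A`). -/
def petrial [DecidableEq E] (G : RibbonGraph E) (A : Finset E) : RibbonGraph E where
  s1 := G.s1
  s1_invol := G.s1_invol
  s1_ne := G.s1_ne
  a := fun e => if e ∈ A then kAdd (G.a e) (G.b e) else G.a e
  b := G.b
  a_ne := by
    intro e
    by_cases h : e ∈ A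
    · simpa [h, kAdd_eq_zero_iff] using G.ab_ne e
    · simpa [h] using G.a_ne e
  b_ne := G.b_ne
  ab_ne := by
    intro e
    by_cases h : e ∈ A
    · simpa [h, kAdd_eq_right_iff] using G.a_ne e
    · simpa [h] using G.ab_ne e

/-- The partial dual `G^{δ(A)}`: swap the roles of `σ0` and `σ2` on the flags of the
edges of `A`. -/
def pdual [DecidableEq E] (G : RibbonGraph E) (A : Finset E) : RibbonGraph E where
  s1 := G.s1
  s1_invol := G.s1_invol
  s1_ne := G.s1_ne
  a := fun e => if e ∈ A then G.b e else G.a e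
  b := fun e => if e ∈ A then G.a e else G.b e
  a_ne := by
    intro e
    by_cases h : e ∈ A
    · simpa [h] using G.b_ne e
    · simpa [h] using G.a_ne e
  b_ne := by
    intro e
    by_cases h : e ∈ A
    · simpa [h] using G.a_ne e
    · simpa [h] using G.b_ne e
  ab_ne := by
    intro e
    by_cases h : e ∈ A
    · simpa [h] using (G.ab_ne e).symm
    · simpa [h] using G.ab_ne e

/-- One step of the boundary (face) walk. -/
def faceStep (G : RibbonGraph E) (x y : Flags E) : Prop := y = G.σ0 x ∨ y = G.s1 x

/-- The number of faces (boundary components) of `G`. -/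
noncomputable def nFaces (G : RibbonGraph E) : ℕ := Nat.card (Quot G.faceStep)

/-- One step of the walk around a vertex. -/
def vertStep (G : RibbonGraph E) (x y : Flags E) : Prop := y = G.σ2 x ∨ y = G.s1 x

/-- The number of vertices of `G`. -/
noncomputable def nVerts (G : RibbonGraph E) : ℕ := Nat.card (Quot G.vertStep)

/-- The number of edges of `G`. -/
noncomputable def nEdges (_G : RibbonGraph E) : ℕ := Nat.card E

/-- One step of a walk in (the total space of) `G`. -/
def compStep (G : RibbonGraph E) (x y : Flags E) : Prop :=
  y = G.σ0 x ∨ y = G.σ2 x ∨ y = G.s1 x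

/-- The number of connected components of `G`. -/
noncomputable def nComps (G : RibbonGraph E) : ℕ := Nat.card (Quot G.compStep)

/-- Two flags lie at the same vertex. -/
def VertexConn (G : RibbonGraph E) : Flags E → Flags E → Prop := Relation.EqvGen G.vertStep

/-- `G` is connected. -/
def Connected (G : RibbonGraph E) : Prop := ∀ x y : Flags E, Relation.EqvGen G.compStep x y

/-- `G` is cubic: every vertex has exactly three edge-ends, i.e. six flags. -/
def Cubic (G : RibbonGraph E) : Prop :=
  ∀ x : Flags E, Nat.card {y : Flags E // G.VertexConn x y} = 6

/-- `G` is orientable. -/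
def Orientable (G : RibbonGraph E) : Prop :=
  ∃ o : Flags E → Bool, ∀ f, o (G.σ0 f) = !(o f) ∧ o (G.σ2 f) = !(o f) ∧ o (G.s1 f) = !(o f)

/-- `G` is a plane graph: orientable and of total genus `0` (Euler's formula). -/
def Plane (G : RibbonGraph E) : Prop :=
  G.Orientable ∧ G.nVerts + G.nFaces = G.nEdges + 2 * G.nComps

/-- `G` is checkerboard colourable: its faces admit a proper 2-colouring. -/
def CheckerboardColourable (G : RibbonGraph E) : Prop :=
  ∃ c : Flags E → Bool, ∀ f, c (G.σ0 f) = c f ∧ c (G.s1 f) = c f ∧ c (G.σ2 f) = !(c f)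

/-- The (topological) Penrose polynomial
`P(G;λ) = ∑_{A ⊆ E(G)} (−1)^{|A|} λ^{f(G^{τ(A)})}`. -/
noncomputable def penrose [Fintype E] [DecidableEq E] (G : RibbonGraph E) : Polynomial ℤ :=
  ∑ A ∈ (Finset.univ : Finset E).powerset,
    (-1 : Polynomial ℤ) ^ A.card * X ^ (G.petrial A).nFaces

/-- The boundary-crossing involution of `G − e`: pass through the deleted edge `e`
via `σ2`, and cross any other edge via `σ0`. -/
def delσ0 [DecidableEq E] (G : RibbonGraph E) (e : E) (f : Flags E) : Flags E :=
  if f.1 = e then G.σ2 f else G.σ0 f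

/-- One step of the boundary walk of `G − e`. -/
def faceStepDel [DecidableEq E] (G : RibbonGraph E) (e : E) (x y : Flags E) : Prop :=
  y = G.delσ0 e x ∨ y = G.s1 x

/-- The number of faces (boundary components) of `G − e`. -/
noncomputable def nFacesDel [DecidableEq E] (G : RibbonGraph E) (e : E) : ℕ :=
  Nat.card (Quot (G.faceStepDel e))

/-- The Penrose polynomial `P(G − e; λ)` of the graph obtained from `G` by deleting the
edge `e`. -/
noncomputable def penroseDel [Fintype E] [DecidableEq E] (G : RibbonGraph E) (e : E) :
    Polynomial ℤ :=
  ∑ A ∈ ((Finset.univ : Finset E).erase e).powerset,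
    (-1 : Polynomial ℤ) ^ A.card * X ^ ((G.petrial A).nFacesDel e)

/-- The Penrose polynomial `P(G/e; λ)` of the contraction `G/e := G^{δ(e)} − e`. -/
noncomputable def penroseContr [Fintype E] [DecidableEq E] (G : RibbonGraph E) (e : E) :
    Polynomial ℤ :=
  (G.pdual {e}).penroseDel e

/-- One step of a walk in `G − e` (together with the leftover vertices of `e`). -/
def compStepDel (G : RibbonGraph E) (e : E) (x y : Flags E) : Prop :=
  (x.1 ≠ e ∧ y = G.σ0 x) ∨ y = G.σ2 x ∨ y = G.s1 x

/-- The number of connected components of `G − e`. -/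
noncomputable def nCompsDel (G : RibbonGraph E) (e : E) : ℕ :=
  Nat.card (Quot (G.compStepDel e))

/-- The edge `e` is a bridge of `G`: deleting it increases the number of connected
components. -/
def IsBridge (G : RibbonGraph E) (e : E) : Prop := G.nComps < G.nCompsDel e

/-- The edge `e` is a non-twisted loop bounding a 2-cell (a trivial loop): one of its
sides is a face traversing only `e`, once. -/
def IsTrivialLoop (G : RibbonGraph E) (e : E) : Prop :=
  ∃ p : Bool × Bool, G.s1 (e, p) = G.σ0 (e, p)

/-- Isomorphism (equivalence) of ribbon graphs over the same edge set. -/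
def IsIso (G H : RibbonGraph E) : Prop :=
  ∃ ψ : Flags E ≃ Flags E, (∀ f, ψ (G.s1 f) = H.s1 (ψ f)) ∧
    (∀ f, ψ (G.σ0 f) = H.σ0 (ψ f)) ∧ (∀ f, ψ (G.σ2 f) = H.σ2 (ψ f))

/-- Given a Penrose state `σ` of the medial graph `G_m` (a choice, at the medial vertex
`v_e` of each edge `e` of `G`, of the crossing transition if `σ e = true` and of the white
split otherwise), the transition used at `v_e` by the closed curves of the state. -/
def stateσ0 (G : RibbonGraph E) (σ : E → Bool) (f : Flags E) : Flags E :=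
  if σ f.1 then G.σ0 (G.σ2 f) else G.σ0 f

/-- The number `c(s)` of closed curves of the Penrose state `σ` of the medial graph. -/
noncomputable def stateCurves (G : RibbonGraph E) (σ : E → Bool) : ℕ :=
  Nat.card (Quot (fun x y : Flags E => y = G.stateσ0 σ x ∨ y = G.s1 x))

/-- A `k`-valuation of the medial graph `G_m`: an edge colouring of `G_m` (edges of `G_m`
correspond to `s1`-orbits of flags of `G`). -/
def IsValuation {n : ℕ} (G : RibbonGraph E) (c : Flags E → Fin n) : Prop :=
  ∀ f, c (G.s1 f) = c f

/-- The medial vertex `v_e` is total in the valuation `c`: all four incident medial edges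
receive the same colour. -/
def TotalAt {n : ℕ} (G : RibbonGraph E) (c : Flags E → Fin n) (e : E) : Prop :=
  ∀ p q : Bool × Bool, c (e, p) = c (e, q)

/-- The medial vertex `v_e` has white-split type with two distinct colours. -/
def WhiteAt {n : ℕ} (G : RibbonGraph E) (c : Flags E → Fin n) (e : E) : Prop :=
  (∀ p : Bool × Bool, c (G.σ0 (e, p)) = c (e, p)) ∧
    c (e, (false, false)) ≠ c (G.σ2 (e, (false, false)))

/-- The medial vertex `v_e` has crossing type with two distinct colours. -/
def CrossAt {n : ℕ} (G : RibbonGraph E) (c : Flags E → Fin n) (e : E) : Prop :=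
  (∀ p : Bool × Bool, c (G.σ0 (G.σ2 (e, p))) = c (e, p)) ∧
    c (e, (false, false)) ≠ c (G.σ0 (e, (false, false)))

/-- An admissible valuation: at every medial vertex the two monochromatic pairs have
distinct colours and form a white split or a crossing. -/
def Admissible {n : ℕ} (G : RibbonGraph E) (c : Flags E → Fin n) : Prop :=
  G.IsValuation c ∧ ∀ e : E, G.WhiteAt c e ∨ G.CrossAt c e

/-- A permissible valuation: every medial vertex is of white-split, crossing or total
type. -/
def Permissible {n : ℕ} (G : RibbonGraph E) (c : Flags E → Fin n) : Prop :=
  G.IsValuation c ∧ ∀ e : E, G.WhiteAt c e ∨ G.CrossAt c e ∨ G.TotalAt c e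

/-- The number of crossing-type medial vertices of a valuation. -/
noncomputable def crCount {n : ℕ} (G : RibbonGraph E) (c : Flags E → Fin n) : ℕ :=
  Nat.card {e : E // G.CrossAt c e}

/-- The number of total medial vertices of a valuation. -/
noncomputable def totCount {n : ℕ} (G : RibbonGraph E) (c : Flags E → Fin n) : ℕ :=
  Nat.card {e : E // G.TotalAt c e}

/-- A proper edge 3-colouring of `G`: edges meeting at a vertex get distinct colours. -/
def ProperEdge3Coloring (G : RibbonGraph E) (κ : E → Fin 3) : Prop :=
  ∀ e e' : E, e ≠ e' →
    (∃ p q : Bool × Bool, G.VertexConn (e, p) (e', q)) → κ e ≠ κ e'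

/-- The circuit partition polynomial `j(G_m^P ; x)` of the Penrose directed medial graph
of an oriented checkerboard coloured graph `G`: its states are exactly the Penrose states
of `G_m`, so `j(G_m^P ; x) = ∑_s x^{c(s)} = ∑_{A ⊆ E(G)} x^{f(G^{τ(A)})}`. -/
noncomputable def circuitPartitionMedial [Fintype E] [DecidableEq E] (G : RibbonGraph E) :
    Polynomial ℤ :=
  ∑ A ∈ (Finset.univ : Finset E).powerset, X ^ (G.petrial A).nFaces

/-- The faces of `G`, i.e. the vertices of the geometric dual `G*`. -/
def Face (G : RibbonGraph E) := Quot G.faceStep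

instance [Finite E] (G : RibbonGraph E) : Finite (Face G) :=
  Finite.of_surjective (Quot.mk _) (fun q => Quot.exists_rep q)

/-- The underlying simple graph of the geometric dual `G*`: vertices are the faces of `G`,
two distinct faces being adjacent when they share an edge. -/
def dualGraph (G : RibbonGraph E) : SimpleGraph (Face G) where
  Adj x y := x ≠ y ∧ ∃ g : Flags E, x = Quot.mk _ g ∧ y = Quot.mk _ (G.σ2 g)
  symm := by
    constructor
    rintro x y ⟨hxy, g, hx, hy⟩
    exact ⟨Ne.symm hxy, G.σ2 g, hy, by rw [σ2_σ2]; exact hx⟩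
  loopless := by constructor; rintro x ⟨h, -⟩; exact h rfl

/-- The chromatic polynomial of a finite simple graph, via Whitney's rank expansion:
`χ(H;λ) = ∑_{S ⊆ E(H)} (−1)^{|S|} λ^{c(S)}`, where `c(S)` is the number of connected
components of the spanning subgraph with edge set `S`. -/
noncomputable def chromPoly {V : Type} [Finite V] (H : SimpleGraph V) : Polynomial ℤ := by
  classical
  haveI := Fintype.ofFinite V
  exact ∑ S ∈ ((Finset.univ : Finset (Sym2 V)).filter (· ∈ H.edgeSet)).powerset,
    (-1 : Polynomial ℤ) ^ S.card * X ^ (Nat.card (Quot (fun x y : V => s(x, y) ∈ S)))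

/-- The chromatic polynomial `χ(G*; λ)` of the geometric dual of `G` (as a multigraph:
it is `0` when `G*` has a loop, i.e. when some edge of `G` has the same face on both of
its sides, and otherwise it is the chromatic polynomial of the underlying simple graph
of `G*`). -/
noncomputable def dualChrom [Finite E] (G : RibbonGraph E) : Polynomial ℤ := by
  classical
  exact if ∃ g : Flags E, Quot.mk G.faceStep (G.σ2 g) = Quot.mk G.faceStep g then 0
    else chromPoly G.dualGraph


/-! ### Auxiliary machinery for the proof of `stmt13` -/

lemma kAdd_zero' : ∀ p : Bool × Bool, kAdd (false, false) p = p := by decide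

lemma kAdd_rc : ∀ p a b : Bool × Bool, kAdd p (kAdd a b) = kAdd (kAdd p b) a := by decide

lemma kAdd_ne_self : ∀ p b : Bool × Bool, b ≠ (false, false) → kAdd p b ≠ p := by decide

lemma four_vals : ∀ a b q : Bool × Bool, a ≠ (false, false) → b ≠ (false, false) → a ≠ b →
    q = (false, false) ∨ q = a ∨ q = b ∨ q = kAdd a b := by decide

lemma σ0_σ0 (G : RibbonGraph E) (f : Flags E) : G.σ0 (G.σ0 f) = f := by
  cases f with
  | mk e p => simp [σ0, kAdd_kAdd]

section CycleCount

variable {F : Type}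

/-- The step relation of a permutation. -/
def cycRel (π : Equiv.Perm F) : F → F → Prop := fun a b => b = π a

lemma quot_mk_cycRel_eq_of_pow (π : Equiv.Perm F) (k : ℕ) (a : F) :
    Quot.mk (cycRel π) ((π ^ k) a) = Quot.mk (cycRel π) a := by
  induction k with
  | zero => simp
  | succ n ih =>
      have h : (π ^ (n + 1)) a = π ((π ^ n) a) := by
        rw [pow_succ', Equiv.Perm.mul_apply]
      rw [h, ← ih]
      exact (Quot.sound (show cycRel π ((π ^ n) a) (π ((π ^ n) a)) from rfl)).symm

lemma quot_mk_cycRel_eq [Finite F] {π : Equiv.Perm F} {a b : F} (h : π.SameCycle a b) :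
    Quot.mk (cycRel π) a = Quot.mk (cycRel π) b := by
  obtain ⟨k, -, rfl⟩ := h.exists_pow_eq'
  exact (quot_mk_cycRel_eq_of_pow π k a).symm

lemma card_quot_cycRel [Fintype F] [DecidableEq F] (π : Equiv.Perm F) :
    Nat.card (Quot (cycRel π)) =
      (Fintype.card F - π.support.card) + π.cycleFactorsFinset.card := by
  classical
  let g : F → ({x : F // π x = x} ⊕ {c : Equiv.Perm F // c ∈ π.cycleFactorsFinset}) :=
    fun x =>
      if h : π x = x then Sum.inl ⟨x, h⟩
      else Sum.inr ⟨π.cycleOf x, by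
        rw [Equiv.Perm.cycleOf_mem_cycleFactorsFinset_iff, Equiv.Perm.mem_support]; exact h⟩
  have hg : ∀ x y : F, π.SameCycle x y → g x = g y := by
    intro x y hxy
    by_cases hx : π x = x
    · have hyx : y = x := by
        obtain ⟨i, hi⟩ := hxy
        rw [Equiv.Perm.zpow_apply_eq_self_of_apply_eq_self hx] at hi
        exact hi.symm
      rw [hyx]
    · have hy : ¬π y = y := by
        intro hy
        apply hx
        have h1 : π.cycleOf x = π.cycleOf y := hxy.cycleOf_eq
        rw [← Equiv.Perm.cycleOf_eq_one_iff] at hy ⊢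
        rw [h1]; exact hy
      simp only [g, dif_neg hx, dif_neg hy]
      exact congrArg _ (Subtype.ext hxy.cycleOf_eq)
  let Φ : Quot (cycRel π) → ({x : F // π x = x} ⊕ {c : Equiv.Perm F // c ∈ π.cycleFactorsFinset}) :=
    Quot.lift g (fun x y hxy => hg x y ⟨1, by rw [zpow_one]; exact hxy.symm⟩)
  have hbij : Function.Bijective Φ := by
    constructor
    · intro qx qy
      obtain ⟨x, rfl⟩ := Quot.exists_rep qx
      obtain ⟨y, rfl⟩ := Quot.exists_rep qy
      intro hxy
      have hxy' : g x = g y := hxy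
      by_cases hx : π x = x <;> by_cases hy : π y = y
      · simp only [g, dif_pos hx, dif_pos hy, Sum.inl.injEq, Subtype.mk.injEq] at hxy'
        rw [hxy']
      · simp only [g, dif_pos hx, dif_neg hy] at hxy'
        cases hxy'
      · simp only [g, dif_neg hx, dif_pos hy] at hxy'
        cases hxy'
      · simp only [g, dif_neg hx, dif_neg hy, Sum.inr.injEq, Subtype.mk.injEq] at hxy'
        have hsc : π.SameCycle x y := by
          have hy2 : y ∈ (π.cycleOf y).support :=
            Equiv.Perm.mem_support_cycleOf_iff.2
              ⟨Equiv.Perm.SameCycle.refl _ _, Equiv.Perm.mem_support.2 hy⟩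
          rw [← hxy'] at hy2
          exact (Equiv.Perm.mem_support_cycleOf_iff.1 hy2).1
        exact quot_mk_cycRel_eq hsc
    · intro s
      rcases s with x | c
      · refine ⟨Quot.mk _ x.val, ?_⟩
        show g x.val = Sum.inl x
        simp only [g, dif_pos x.prop]
      · obtain ⟨hc1, hc2⟩ := Equiv.Perm.mem_cycleFactorsFinset_iff.1 c.prop
        obtain ⟨x, hx, -⟩ := hc1
        have hxs : x ∈ (c : Equiv.Perm F).support := Equiv.Perm.mem_support.2 hx
        have hπx : ¬π x = x := by rw [← hc2 x hxs]; exact hx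
        refine ⟨Quot.mk _ x, ?_⟩
        show g x = Sum.inr c
        simp only [g, dif_neg hπx]
        exact congrArg _ (Subtype.ext (Equiv.Perm.cycle_is_cycleOf hxs c.prop).symm)
  have hcard := Nat.card_eq_of_bijective Φ hbij
  rw [hcard, Nat.card_eq_fintype_card, Fintype.card_sum]
  congr 1
  · rw [Fintype.card_subtype]
    have h1 : (Finset.univ.filter fun x => π x = x) = π.supportᶜ := by
      ext x
      simp [Equiv.Perm.mem_support]
    rw [h1, Finset.card_compl]
  · exact Fintype.card_coe _

lemma neg_one_pow_card_quot_cycRel [Fintype F] [DecidableEq F] (π : Equiv.Perm F) :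
    ((-1 : ℤ) ^ Nat.card (Quot (cycRel π))) =
      (-1) ^ Fintype.card F * (Equiv.Perm.sign π : ℤ) := by
  rw [card_quot_cycRel]
  have hs : π.support.card ≤ Fintype.card F := by
    simpa using Finset.card_le_card (Finset.subset_univ π.support)
  have hct : Multiset.card π.cycleType = π.cycleFactorsFinset.card := by
    simp [Equiv.Perm.cycleType]
  have hsign : (Equiv.Perm.sign π : ℤ) =
      (-1) ^ (π.support.card + π.cycleFactorsFinset.card) := by
    have h := Equiv.Perm.sign_of_cycleType π
    rw [Equiv.Perm.sum_cycleType, hct] at h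
    rw [h]
    push_cast
    rfl
  have h1 : ((-1 : ℤ)) ^ (Fintype.card F - π.support.card) * (-1) ^ π.support.card =
      (-1) ^ Fintype.card F := by
    rw [← pow_add, Nat.sub_add_cancel hs]
  have h2 : ((-1 : ℤ)) ^ π.support.card * (-1) ^ π.support.card = 1 := by
    rw [← pow_add]
    exact Even.neg_one_pow ⟨_, rfl⟩
  rw [hsign, pow_add, pow_add, ← h1]
  calc ((-1 : ℤ)) ^ (Fintype.card F - π.support.card) * (-1) ^ π.cycleFactorsFinset.card
      = (-1) ^ (Fintype.card F - π.support.card) * 1 * (-1) ^ π.cycleFactorsFinset.card := by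
        ring
    _ = (-1) ^ (Fintype.card F - π.support.card) *
          ((-1) ^ π.support.card * (-1) ^ π.support.card) *
          (-1) ^ π.cycleFactorsFinset.card := by rw [h2]
    _ = (-1) ^ (Fintype.card F - π.support.card) * (-1) ^ π.support.card *
          ((-1) ^ π.support.card * (-1) ^ π.cycleFactorsFinset.card) := by ring

end CycleCount

/-- The face permutation of `H`, restricted to the flags with `d`-colour `true`. -/
def fperm (H : RibbonGraph E) (d : Flags E → Bool) (hd0 : ∀ f, d (H.σ0 f) = !d f)
    (hd1 : ∀ f, d (H.s1 f) = !d f) : Equiv.Perm {f : Flags E // d f = true} where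
  toFun x := ⟨H.s1 (H.σ0 x.val), by rw [hd1, hd0, x.prop]; rfl⟩
  invFun x := ⟨H.σ0 (H.s1 x.val), by rw [hd0, hd1, x.prop]; rfl⟩
  left_inv x := Subtype.ext (by simp [H.s1_invol, σ0_σ0])
  right_inv x := Subtype.ext (by simp [H.s1_invol, σ0_σ0])

lemma nFaces_eq [Fintype E] [DecidableEq E] (H : RibbonGraph E) (d : Flags E → Bool)
    (hd0 : ∀ f, d (H.σ0 f) = !d f) (hd1 : ∀ f, d (H.s1 f) = !d f)
    (PD : Equiv.Perm {f : Flags E // d f = true})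
    (hPD : ∀ x : {f : Flags E // d f = true}, (PD x).val = H.s1 (H.σ0 x.val)) :
    H.nFaces = Nat.card (Quot (cycRel PD)) := by
  classical
  set P : Equiv.Perm (Flags E) :=
    ⟨fun f => H.s1 (H.σ0 f), fun f => H.σ0 (H.s1 f),
     fun f => by simp [H.s1_invol, σ0_σ0],
     fun f => by simp [H.s1_invol, σ0_σ0]⟩ with hP
  have hPapp : ∀ z, P z = H.s1 (H.σ0 z) := fun z => rfl
  have hPinvapp : ∀ z, P⁻¹ z = H.σ0 (H.s1 z) := fun z => rfl
  set U : Equiv.Perm (Flags E) := Function.Involutive.toPerm H.σ0 (σ0_σ0 H) with hU'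
  have hUapp : ∀ z, U z = H.σ0 z := fun z => rfl
  have hUinv : U⁻¹ = U := Equiv.ext fun z => rfl
  have hU : U * P * U = P⁻¹ := by
    apply Equiv.ext
    intro z
    rw [Equiv.Perm.mul_apply, Equiv.Perm.mul_apply, hUapp, hUapp, hPapp, hPinvapp, σ0_σ0]
  have hconj : ∀ (i : ℤ) (z : Flags E), H.σ0 ((P ^ i) z) = (P ^ (-i)) (H.σ0 z) := by
    intro i z
    have h1 := map_zpow (MulAut.conj U) P i
    simp only [MulAut.conj_apply, hUinv] at h1
    rw [hU] at h1
    have h2 : (P⁻¹) ^ i = P ^ (-i) := by rw [inv_zpow, zpow_neg]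
    rw [h2] at h1
    have h3 := congrFun (congrArg (fun (σ : Equiv.Perm (Flags E)) => (σ : Flags E → Flags E))
      h1) (H.σ0 z)
    simp only [Equiv.Perm.mul_apply] at h3
    rw [hUapp, hUapp, σ0_σ0] at h3
    exact h3
  have hdP : ∀ z, d (P z) = d z := by
    intro z
    rw [hPapp, hd1, hd0, Bool.not_not]
  have hdPow : ∀ (k : ℕ) (z : Flags E), d ((P ^ k) z) = d z := by
    intro k
    induction k with
    | zero => intro z; simp
    | succ n ih =>
        intro z
        have h : (P ^ (n + 1)) z = P ((P ^ n) z) := by rw [pow_succ', Equiv.Perm.mul_apply]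
        rw [h, hdP, ih]
  have moveσ0 : ∀ {a b : Flags E}, P.SameCycle a b → P.SameCycle (H.σ0 a) (H.σ0 b) := by
    rintro a b ⟨i, rfl⟩
    exact ⟨-i, (hconj i a).symm⟩
  have flip : ∀ {a b : Flags E}, P.SameCycle (H.σ0 a) b → P.SameCycle (H.σ0 b) a := by
    rintro a b ⟨i, rfl⟩
    refine ⟨i, ?_⟩
    rw [hconj i (H.σ0 a), σ0_σ0, ← Equiv.Perm.mul_apply, ← zpow_add, add_neg_cancel,
      zpow_zero, Equiv.Perm.one_apply]
  have hR : ∀ a b : Flags E, Relation.EqvGen H.faceStep a b →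
      (P.SameCycle a b ∨ P.SameCycle (H.σ0 a) b) := by
    intro a b h
    induction h with
    | rel x y hxy =>
        rcases hxy with h | h
        · right; rw [h]
        · right
          refine ⟨1, ?_⟩
          rw [zpow_one, h]
          show H.s1 (H.σ0 (H.σ0 x)) = H.s1 x
          rw [σ0_σ0]
    | refl x => left; exact Equiv.Perm.SameCycle.refl _ _
    | symm x y _ ih =>
        rcases ih with h | h
        · left; exact h.symm
        · right; exact flip h
    | trans x y z _ _ ih1 ih2 =>
        rcases ih1 with h1 | h1 <;> rcases ih2 with h2 | h2
        · left; exact h1.trans h2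
        · right; exact (moveσ0 h1).trans h2
        · right; exact h1.trans h2
        · left; exact ((flip h1).symm).trans h2
  have hlift : ∀ (k : ℕ) (x : {f : Flags E // d f = true}),
      ((PD ^ k) x).val = (P ^ k) x.val := by
    intro k
    induction k with
    | zero => intro x; simp
    | succ n ih =>
        intro x
        have h1 : (PD ^ (n + 1)) x = PD ((PD ^ n) x) := by
          rw [pow_succ', Equiv.Perm.mul_apply]
        have h2 : (P ^ (n + 1)) x.val = P ((P ^ n) x.val) := by
          rw [pow_succ', Equiv.Perm.mul_apply]
        rw [h1, h2, hPD, ← ih, hPapp]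
  have hsound : ∀ x y : {f : Flags E // d f = true}, cycRel PD x y →
      Quot.mk H.faceStep x.val = Quot.mk H.faceStep y.val := by
    intro x y hxy
    have h1 : Quot.mk H.faceStep x.val = Quot.mk H.faceStep (H.σ0 x.val) :=
      Quot.sound (Or.inl rfl)
    have h2 : Quot.mk H.faceStep (H.σ0 x.val) = Quot.mk H.faceStep (H.s1 (H.σ0 x.val)) :=
      Quot.sound (Or.inr rfl)
    rw [h1, h2, ← hPD x, ← hxy]
  let Φ : Quot (cycRel PD) → Quot H.faceStep :=
    Quot.lift (fun x => Quot.mk H.faceStep x.val) hsound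
  have hbij : Function.Bijective Φ := by
    constructor
    · intro qx qy
      obtain ⟨x, rfl⟩ := Quot.exists_rep qx
      obtain ⟨y, rfl⟩ := Quot.exists_rep qy
      intro h
      have h' : Quot.mk H.faceStep x.val = Quot.mk H.faceStep y.val := h
      have hf := Quot.eqvGen_exact h'
      rcases hR _ _ hf with hsc | hsc
      · obtain ⟨k, -, hk⟩ := hsc.exists_pow_eq'
        have heq : (PD ^ k) x = y := Subtype.ext (by rw [hlift]; exact hk)
        exact quot_mk_cycRel_eq ⟨(k : ℤ), by rw [zpow_natCast]; exact heq⟩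
      · exfalso
        obtain ⟨k, -, hk⟩ := hsc.exists_pow_eq'
        have h1 : d ((P ^ k) (H.σ0 x.val)) = d (H.σ0 x.val) := hdPow k _
        rw [hk, hd0, x.prop, y.prop] at h1
        simp at h1
    · intro q
      obtain ⟨g, rfl⟩ := Quot.exists_rep q
      by_cases hg : d g = true
      · exact ⟨Quot.mk _ ⟨g, hg⟩, rfl⟩
      · have hg2 : d g = false := by
          cases hdg : d g
          · rfl
          · exact absurd hdg hg
        have hg' : d (H.σ0 g) = true := by rw [hd0, hg2]; rfl
        refine ⟨Quot.mk _ ⟨H.σ0 g, hg'⟩, ?_⟩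
        show Quot.mk H.faceStep (H.σ0 g) = Quot.mk H.faceStep g
        exact (Quot.sound (show H.faceStep g (H.σ0 g) from Or.inl rfl)).symm
  exact (Nat.card_eq_of_bijective Φ hbij).symm

lemma petrial_σ0_mem [DecidableEq E] (G : RibbonGraph E) (A : Finset E) (f : Flags E)
    (h : f.1 ∈ A) : (G.petrial A).σ0 f = G.σ0 (G.σ2 f) := by
  cases f with
  | mk e p =>
      have h' : e ∈ A := h
      simp [σ0, σ2, petrial, h', kAdd_rc]

lemma petrial_σ0_not_mem [DecidableEq E] (G : RibbonGraph E) (A : Finset E) (f : Flags E)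
    (h : f.1 ∉ A) : (G.petrial A).σ0 f = G.σ0 f := by
  cases f with
  | mk e p =>
      have h' : e ∉ A := h
      simp [σ0, petrial, h']

/-- The "white-smoothing" permutation of the `d`-true flags of the edges of `B`. -/
def sperm [DecidableEq E] (G : RibbonGraph E) (d : Flags E → Bool)
    (hd2 : ∀ f, d (G.σ2 f) = d f) (B : Finset E) :
    Equiv.Perm {f : Flags E // d f = true} :=
  Function.Involutive.toPerm
    (fun x => ⟨if x.val.1 ∈ B then G.σ2 x.val else x.val, by
      by_cases h : x.val.1 ∈ B
      · rw [if_pos h, hd2]; exact x.prop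
      · rw [if_neg h]; exact x.prop⟩)
    (fun x => Subtype.ext (by
      by_cases h : x.val.1 ∈ B
      · have h2 : (G.σ2 x.val).1 = x.val.1 := rfl
        simp [h, h2, σ2_σ2]
      · simp [h]))

lemma sperm_apply [DecidableEq E] (G : RibbonGraph E) (d : Flags E → Bool)
    (hd2 : ∀ f, d (G.σ2 f) = d f) (B : Finset E) (x : {f : Flags E // d f = true}) :
    (sperm G d hd2 B x).val = if x.val.1 ∈ B then G.σ2 x.val else x.val := rfl

lemma sperm_insert [DecidableEq E] (G : RibbonGraph E) (d : Flags E → Bool)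
    (hd2 : ∀ f, d (G.σ2 f) = d f) (e : E) (B : Finset E) (he : e ∉ B) :
    sperm G d hd2 (insert e B) = sperm G d hd2 {e} * sperm G d hd2 B := by
  apply Equiv.ext
  intro x
  apply Subtype.ext
  rw [Equiv.Perm.mul_apply, sperm_apply, sperm_apply, sperm_apply]
  by_cases h1 : x.val.1 = e
  · simp [h1, he]
  · by_cases h2 : x.val.1 ∈ B
    · have hfst : (G.σ2 x.val).1 = x.val.1 := rfl
      simp [Finset.mem_insert, h1, h2, hfst]
    · simp [Finset.mem_insert, h1, h2]

lemma sperm_single_eq_swap [DecidableEq E] (G : RibbonGraph E) (d : Flags E → Bool)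
    (hd0 : ∀ f, d (G.σ0 f) = !d f) (hd2 : ∀ f, d (G.σ2 f) = d f) (e : E) :
    ∃ u v : {f : Flags E // d f = true}, u ≠ v ∧ sperm G d hd2 {e} = Equiv.swap u v := by
  classical
  set u0 : Flags E := if d (e, (false, false)) = true then (e, (false, false))
    else (e, G.a e) with hu0
  have hσ0e : G.σ0 (e, (false, false)) = (e, G.a e) := by simp [σ0, kAdd_zero']
  have hu0fst : u0.1 = e := by
    by_cases h : d (e, (false, false)) = true <;> simp [hu0, h]
  have hdu0 : d u0 = true := by
    by_cases h : d (e, (false, false)) = true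
    · rw [hu0, if_pos h]; exact h
    · have h2 : d (e, (false, false)) = false := by
        cases hdg : d (e, (false, false))
        · rfl
        · exact absurd hdg h
      rw [hu0, if_neg h, ← hσ0e, hd0, h2]
      rfl
  set v0 : Flags E := G.σ2 u0 with hv0
  have hdv0 : d v0 = true := by rw [hv0, hd2]; exact hdu0
  have hv0fst : v0.1 = e := hu0fst
  have hne : u0 ≠ v0 := by
    intro hEq
    have h2 : v0.2 = kAdd u0.2 (G.b u0.1) := rfl
    exact kAdd_ne_self u0.2 (G.b u0.1) (G.b_ne u0.1) (congrArg Prod.snd hEq).symm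
  refine ⟨⟨u0, hdu0⟩, ⟨v0, hdv0⟩, fun h => hne (congrArg Subtype.val h), ?_⟩
  apply Equiv.ext
  intro x
  apply Subtype.ext
  rw [sperm_apply]
  by_cases hx : x.val.1 = e
  · have hxval : x.val = (e, x.val.2) := by
      rw [← hx]
    rw [if_pos (by rw [hx]; exact Finset.mem_singleton_self e)]
    rcases four_vals (G.a e) (G.b e) x.val.2 (G.a_ne e) (G.b_ne e) (G.ab_ne e)
      with h | h | h | h
    · -- x.val = (e, 00) : the base flag, x = u
      have hxv : x.val = (e, (false, false)) := by rw [hxval, h]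
      have htt : d (e, (false, false)) = true := by rw [← hxv]; exact x.prop
      have hxu : x = ⟨u0, hdu0⟩ :=
        Subtype.ext (show (x : Flags E) = u0 by rw [hu0, if_pos htt]; exact hxv)
      rw [hxu, Equiv.swap_apply_left]
    · -- x.val = (e, a) : x = u, in the other colouring case
      have hxv : x.val = (e, G.a e) := by rw [hxval, h]
      have htt : d (e, (false, false)) = false := by
        have h1 : d (e, G.a e) = !d (e, (false, false)) := by rw [← hσ0e, hd0]
        have h2 : (true : Bool) = !d (e, (false, false)) := by
          rw [← h1, ← hxv, x.prop]
        cases hdg : d (e, (false, false))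
        · rfl
        · rw [hdg] at h2; exact absurd h2.symm (by simp)
      have hxu : x = ⟨u0, hdu0⟩ :=
        Subtype.ext (show (x : Flags E) = u0 by
          rw [hu0, if_neg (by simp [htt])]; exact hxv)
      rw [hxu, Equiv.swap_apply_left]
    · -- x.val = (e, b) = σ2 (e,00) : x = v
      have hxv : x.val = G.σ2 (e, (false, false)) := by
        rw [hxval, h]
        simp [σ2, kAdd_zero']
      have htt : d (e, (false, false)) = true := by
        have := x.prop
        rw [hxv, hd2] at this
        exact this
      have hxu : x = ⟨v0, hdv0⟩ :=
        Subtype.ext (show (x : Flags E) = v0 by rw [hv0, hu0, if_pos htt]; exact hxv)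
      rw [hxu, Equiv.swap_apply_right]
      exact σ2_σ2 G u0
    · -- x.val = (e, a + b) = σ2 (e, a) : x = v
      have hxv : x.val = G.σ2 (e, G.a e) := by
        rw [hxval, h]
        simp [σ2]
      have htt : d (e, (false, false)) = false := by
        have h1 : d (e, G.a e) = !d (e, (false, false)) := by rw [← hσ0e, hd0]
        have h2 := x.prop
        rw [hxv, hd2, h1] at h2
        cases hdg : d (e, (false, false))
        · rfl
        · rw [hdg] at h2; exact absurd h2 (by simp)
      have hxu : x = ⟨v0, hdv0⟩ :=
        Subtype.ext (show (x : Flags E) = v0 by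
          rw [hv0, hu0, if_neg (by simp [htt])]; exact hxv)
      rw [hxu, Equiv.swap_apply_right]
      exact σ2_σ2 G u0
  · rw [if_neg (by simpa using hx)]
    have hxu : x ≠ ⟨u0, hdu0⟩ := fun h => hx (by rw [h]; exact hu0fst)
    have hxv : x ≠ ⟨v0, hdv0⟩ := fun h => hx (by rw [h]; exact hv0fst)
    rw [Equiv.swap_apply_of_ne_of_ne hxu hxv]

lemma sperm_sign [Fintype E] [DecidableEq E] (G : RibbonGraph E) (d : Flags E → Bool)
    (hd0 : ∀ f, d (G.σ0 f) = !d f) (hd2 : ∀ f, d (G.σ2 f) = d f) (B : Finset E) :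
    Equiv.Perm.sign (sperm G d hd2 B) = (-1) ^ B.card := by
  classical
  induction B using Finset.induction_on with
  | empty =>
      have h : sperm G d hd2 ∅ = 1 := by
        apply Equiv.ext
        intro x
        apply Subtype.ext
        rw [sperm_apply]
        simp
      rw [h]
      simp
  | @insert e B he ih =>
      obtain ⟨u, v, huv, hswap⟩ := sperm_single_eq_swap G d hd0 hd2 e
      rw [sperm_insert G d hd2 e B he, map_mul, ih, hswap, Equiv.Perm.sign_swap huv,
        Finset.card_insert_of_notMem he, pow_succ]
      exact mul_comm _ _

lemma petrial_faces_parity [Fintype E] [DecidableEq E] (G : RibbonGraph E)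
    (o c : Flags E → Bool)
    (ho : ∀ f, o (G.σ0 f) = !o f ∧ o (G.σ2 f) = !o f ∧ o (G.s1 f) = !o f)
    (hc : ∀ f, c (G.σ0 f) = c f ∧ c (G.s1 f) = c f ∧ c (G.σ2 f) = !c f)
    (A : Finset E) :
    ((-1 : ℤ)) ^ (G.petrial A).nFaces = (-1) ^ A.card * (-1) ^ G.nFaces := by
  classical
  set d : Flags E → Bool := fun f => xor (o f) (c f) with hd
  have hd0 : ∀ f, d (G.σ0 f) = !d f := by
    intro f
    simp only [hd]
    rw [(ho f).1, (hc f).1]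
    cases o f <;> cases c f <;> rfl
  have hd1 : ∀ f, d (G.s1 f) = !d f := by
    intro f
    simp only [hd]
    rw [(ho f).2.2, (hc f).2.1]
    cases o f <;> cases c f <;> rfl
  have hd2 : ∀ f, d (G.σ2 f) = d f := by
    intro f
    simp only [hd]
    rw [(ho f).2.1, (hc f).2.2]
    cases o f <;> cases c f <;> rfl
  have hd0A : ∀ f, d ((G.petrial A).σ0 f) = !d f := by
    intro f
    by_cases h : f.1 ∈ A
    · rw [petrial_σ0_mem G A f h, hd0, hd2]
    · rw [petrial_σ0_not_mem G A f h, hd0]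
  have hd1A : ∀ f, d ((G.petrial A).s1 f) = !d f := hd1
  have hcomp : fperm (G.petrial A) d hd0A hd1A = fperm G d hd0 hd1 * sperm G d hd2 A := by
    apply Equiv.ext
    intro x
    apply Subtype.ext
    rw [Equiv.Perm.mul_apply]
    show (G.petrial A).s1 ((G.petrial A).σ0 x.val) =
      G.s1 (G.σ0 (sperm G d hd2 A x).val)
    rw [sperm_apply]
    by_cases h : x.val.1 ∈ A
    · rw [if_pos h, petrial_σ0_mem G A x.val h]
      rfl
    · rw [if_neg h, petrial_σ0_not_mem G A x.val h]
      rfl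
  have h1 : (G.petrial A).nFaces =
      Nat.card (Quot (cycRel (fperm (G.petrial A) d hd0A hd1A))) :=
    nFaces_eq (G.petrial A) d hd0A hd1A _ (fun x => rfl)
  have h2 : G.nFaces = Nat.card (Quot (cycRel (fperm G d hd0 hd1))) :=
    nFaces_eq G d hd0 hd1 _ (fun x => rfl)
  rw [h1, h2, neg_one_pow_card_quot_cycRel, neg_one_pow_card_quot_cycRel, hcomp, map_mul,
    sperm_sign G d hd0 hd2 A]
  push_cast
  ring

/-- If `G` is orientable and checkerboard colourable, then
`P(G;−1) = (−1)^{f(G)} 2^{e(G)}`. -/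
theorem stmt13 {E : Type} [Fintype E] [DecidableEq E] (G : RibbonGraph E)
    (hor : G.Orientable) (hcb : G.CheckerboardColourable) :
    G.penrose.eval (-1) = (-1 : ℤ) ^ G.nFaces * 2 ^ G.nEdges := by
  classical
  obtain ⟨o, ho⟩ := hor
  obtain ⟨c, hc⟩ := hcb
  unfold penrose
  rw [Polynomial.eval_finset_sum]
  have hterm : ∀ A ∈ (Finset.univ : Finset E).powerset,
      (((-1 : Polynomial ℤ)) ^ A.card * X ^ (G.petrial A).nFaces).eval (-1) =
        (-1) ^ G.nFaces := by
    intro A _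
    rw [Polynomial.eval_mul, Polynomial.eval_pow, Polynomial.eval_pow, Polynomial.eval_X]
    have he1 : ((-1 : Polynomial ℤ)).eval (-1) = -1 := by simp
    rw [he1, petrial_faces_parity G o c ho hc A, ← mul_assoc, ← mul_pow]
    norm_num
  rw [Finset.sum_congr rfl hterm, Finset.sum_const, Finset.card_powerset, Finset.card_univ,
    nsmul_eq_mul]
  have hE : G.nEdges = Fintype.card E := Nat.card_eq_fintype_card
  rw [hE]
  push_cast
  ring

end RibbonGraph

end Penrose
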